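/- Assume 0 < ra < 1/(2s₂). Then: (i) for every x ∈ [0,1], τ₁(x) ∈ I₀ and τ₄(x) ∉ I₀; (ii) for every x ∈ I₀, τ₂(x) ∈ I₀; and (iii) for every x ∈ I₀, τ₃(x) ∈ I₀ if and only if x ∈ I₁. -/
import Mathlib


theorem stmt_5 (s₁ s₂ r a : ℝ) (hs₁ : 1 < s₁) (hs₂ : 1 < s₂)
    (hsum : 1 / s₁ + 1 / s₂ = 1) (hr : 0 < r) (ha : 0 < a)
    (hra : r * a < 1 / (2 * s₂)) :
    (∀ x ∈ Set.Icc (0 : ℝ) 1,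
        (1 - x) / (2 * s₂) ∈ Set.Icc (0 : ℝ) (1 / 2 + r * a) ∧
        (x - 1) / (2 * s₁) + 1 ∉ Set.Icc (0 : ℝ) (1 / 2 + r * a)) ∧
    (∀ x ∈ Set.Icc (0 : ℝ) (1 / 2 + r * a),
        x / (s₁ + 2 * r * s₁ * a) + 1 / 2 - 1 / (2 * s₁) ∈
          Set.Icc (0 : ℝ) (1 / 2 + r * a)) ∧
    (∀ x ∈ Set.Icc (0 : ℝ) (1 / 2 + r * a),
        (1 / 2 + 1 / (2 * s₂) - x / (s₂ + 2 * r * s₂ * a) ∈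
            Set.Icc (0 : ℝ) (1 / 2 + r * a) ↔
          x ∈ Set.Icc ((s₂ + 2 * r * s₂ * a) * (1 / (2 * s₂) - r * a))
            (1 / 2 + r * a))) := by
  have hs₁0 : (0:ℝ) < s₁ := by linarith
  have hs₂0 : (0:ℝ) < s₂ := by linarith
  have hra0 : 0 < r * a := mul_pos hr ha
  have hd₁ : (0:ℝ) < s₁ + 2 * r * s₁ * a := by nlinarith
  have hd₂ : (0:ℝ) < s₂ + 2 * r * s₂ * a := by nlinarith
  have h2s₁ : (0:ℝ) < 2 * s₁ := by linarith
  have h2s₂ : (0:ℝ) < 2 * s₂ := by linarith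
  have hss : s₁ + s₂ = s₁ * s₂ := by
    field_simp at hsum; linarith
  -- r*a*2*s₂ < 1
  have hra2 : r * a * (2 * s₂) < 1 := (lt_div_iff₀ h2s₂).mp hra
  refine ⟨fun x hx => ?_, fun x hx => ?_, fun x hx => ?_⟩
  · obtain ⟨hx0, hx1⟩ := hx
    constructor
    · constructor
      · apply div_nonneg (by linarith) (by linarith)
      · rw [div_le_iff₀ h2s₂]; nlinarith
    · intro hmem
      have h2 : (x - 1) / (2 * s₁) ≤ -(1/2) + r * a := by linarith [hmem.2]
      rw [div_le_iff₀ h2s₁] at h2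
      nlinarith [mul_lt_mul_of_pos_left hra2 hs₁0]
  · obtain ⟨hx0, hx1⟩ := hx
    have h1 : 1 / (2 * s₁) ≤ 1 / 2 := by
      rw [div_le_div_iff₀ h2s₁ (by norm_num)]; linarith
    have h2 : x / (s₁ + 2 * r * s₁ * a) ≤ 1 / (2 * s₁) := by
      rw [div_le_div_iff₀ hd₁ h2s₁]; nlinarith
    have h3 : 0 ≤ x / (s₁ + 2 * r * s₁ * a) := div_nonneg hx0 hd₁.le
    constructor <;> [linarith; linarith]
  · obtain ⟨hx0, hx1⟩ := hx
    have h2 : x / (s₂ + 2 * r * s₂ * a) ≤ 1 / (2 * s₂) := by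
      rw [div_le_div_iff₀ hd₂ h2s₂]; nlinarith
    have h3 : 1 / (2 * s₂) ≤ 1 / 2 := by
      rw [div_le_div_iff₀ h2s₂ (by norm_num)]; linarith
    constructor
    · rintro ⟨hl, hu⟩
      refine ⟨?_, hx1⟩
      have : 1 / (2 * s₂) - r * a ≤ x / (s₂ + 2 * r * s₂ * a) := by linarith
      rw [le_div_iff₀ hd₂] at this
      linarith [this, mul_comm (1 / (2 * s₂) - r * a) (s₂ + 2 * r * s₂ * a)]
    · rintro ⟨hl, hu⟩
      have : 1 / (2 * s₂) - r * a ≤ x / (s₂ + 2 * r * s₂ * a) := by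
        rw [le_div_iff₀ hd₂]
        linarith [mul_comm (1 / (2 * s₂) - r * a) (s₂ + 2 * r * s₂ * a)]
      constructor <;> linarith
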